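/- Let X be a Banach function space over ℝⁿ, λ_0 ∈ (0,1) and C ≥ 1, and suppose ‖m_{λ_0} f‖_X ≤ C‖f‖_X for all f ∈ X. Let γ = γ(n,λ_0) ∈ (0,1) be the constant for which m_{γη} f ≤ m_η(m_{λ_0} f) pointwise for all η ∈ (0,1), and set r := log C / log(1/γ). Then for every λ ∈ (0,1) and every f ∈ X, ‖m_λ f‖_X ≤ C² λ^{-r} ‖f‖_X. -/

import Mathlib

open MeasureTheory Set Filter
open scoped ENNReal Topology

noncomputable section

/-- A cube in `ℝⁿ` with sides parallel to the coordinate axes (positive side length). -/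
def IsCube {n : ℕ} (Q : Set (Fin n → ℝ)) : Prop :=
  ∃ (a : Fin n → ℝ) (h : ℝ), 0 < h ∧ Q = Set.Icc a (fun i => a i + h)

/-- The Hardy–Littlewood maximal operator: `Mf(x) = sup_{Q ∋ x} (1/|Q|) ∫_Q f`. -/
def maximal {n : ℕ} (f : (Fin n → ℝ) → ℝ≥0∞) (x : Fin n → ℝ) : ℝ≥0∞ :=
  ⨆ (Q : Set (Fin n → ℝ)) (_ : IsCube Q) (_ : x ∈ Q), (∫⁻ y in Q, f y) / volume Q

/-- The Hardy–Littlewood maximal operator restricted to a cube `Q`. -/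
def maximalOn {n : ℕ} (Q : Set (Fin n → ℝ)) (f : (Fin n → ℝ) → ℝ≥0∞)
    (x : Fin n → ℝ) : ℝ≥0∞ :=
  ⨆ (R : Set (Fin n → ℝ)) (_ : IsCube R) (_ : R ⊆ Q) (_ : x ∈ R),
    (∫⁻ y in R, f y) / volume R

/-- The non-increasing rearrangement `g*(t) = inf {α > 0 : |{y : g y > α}| ≤ t}`. -/
def rearr {n : ℕ} (g : (Fin n → ℝ) → ℝ≥0∞) (t : ℝ≥0∞) : ℝ≥0∞ :=
  sInf {α : ℝ≥0∞ | 0 < α ∧ volume {y | α < g y} ≤ t}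

/-- The `λ`-median (local) maximal operator `m_λ f(x) = sup_{Q ∋ x} (f χ_Q)*(λ|Q|)`. -/
def mMed {n : ℕ} (la : ℝ) (f : (Fin n → ℝ) → ℝ≥0∞) (x : Fin n → ℝ) : ℝ≥0∞ :=
  ⨆ (Q : Set (Fin n → ℝ)) (_ : IsCube Q) (_ : x ∈ Q),
    rearr (Q.indicator f) (ENNReal.ofReal la * volume Q)

/-- The (absolute value of a) real function viewed as an `ℝ≥0∞`-valued function. -/
def toE {n : ℕ} (f : (Fin n → ℝ) → ℝ) : (Fin n → ℝ) → ℝ≥0∞ :=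
  fun y => ENNReal.ofReal |f y|

/-- `x` is a Lebesgue density point of the set `E`. -/
def IsDensityPoint {n : ℕ} (E : Set (Fin n → ℝ)) (x : Fin n → ℝ) : Prop :=
  Tendsto (fun r : ℝ => volume (E ∩ Metric.ball x r) / volume (Metric.ball x r))
    (𝓝[>] (0 : ℝ)) (𝓝 1)

/-- `x` is a point of approximate continuity of `f`. -/
def ApproxContinuousAt {n : ℕ} (f : (Fin n → ℝ) → ℝ) (x : Fin n → ℝ) : Prop :=
  ∀ ε : ℝ, 0 < ε →
    Tendsto (fun r : ℝ =>
        volume ({y | ε ≤ |f y - f x|} ∩ Metric.ball x r) / volume (Metric.ball x r))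
      (𝓝[>] (0 : ℝ)) (𝓝 0)

/-- A Banach function space over `ℝⁿ`, described by its (Luxemburg) function norm on
nonnegative extended-real-valued measurable functions. The ideal property is encoded by
`mono`, the Fatou property by `fatou`, and the saturation property by `saturation`. -/
structure BanachFunctionSpace (n : ℕ) where
  N : ((Fin n → ℝ) → ℝ≥0∞) → ℝ≥0∞
  add_le : ∀ f g, N (fun x => f x + g x) ≤ N f + N g
  smul_eq : ∀ (c : ℝ≥0∞), c ≠ ∞ → ∀ f, N (fun x => c * f x) = c * N f
  mono : ∀ f g, (∀ᵐ x ∂(volume : Measure (Fin n → ℝ)), f x ≤ g x) → N f ≤ N g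
  eq_zero : ∀ f, N f = 0 → f =ᵐ[(volume : Measure (Fin n → ℝ))] 0
  fatou : ∀ F : ℕ → ((Fin n → ℝ) → ℝ≥0∞),
    (∀ j, ∀ᵐ x ∂(volume : Measure (Fin n → ℝ)), F j x ≤ F (j + 1) x) →
    N (fun x => ⨆ j, F j x) = ⨆ j, N (F j)
  saturation : ∀ E : Set (Fin n → ℝ), MeasurableSet E → 0 < volume E →
    ∃ F, F ⊆ E ∧ MeasurableSet F ∧ 0 < volume F ∧ N (F.indicator 1) ≠ ∞

/-- The associate (Köthe dual) norm of a function norm `N`: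
`‖g‖_{X'} = sup_{‖h‖_X ≤ 1} ∫ g h`. -/
def assocOf {n : ℕ} (N : ((Fin n → ℝ) → ℝ≥0∞) → ℝ≥0∞)
    (g : (Fin n → ℝ) → ℝ≥0∞) : ℝ≥0∞ :=
  ⨆ (h : (Fin n → ℝ) → ℝ≥0∞) (_ : N h ≤ 1), ∫⁻ x, g x * h x

/-- The norm of the space `X^{1/p}`: `‖f‖_{X^{1/p}} = ‖|f|^p‖_X^{1/p}`. -/
def powOf {n : ℕ} (N : ((Fin n → ℝ) → ℝ≥0∞) → ℝ≥0∞) (p : ℝ)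
    (f : (Fin n → ℝ) → ℝ≥0∞) : ℝ≥0∞ :=
  (N fun x => f x ^ p) ^ (1 / p)

/-- An operator `T` is bounded with respect to the function norm `N`. -/
def BoundedOn {n : ℕ} (N : ((Fin n → ℝ) → ℝ≥0∞) → ℝ≥0∞)
    (T : ((Fin n → ℝ) → ℝ≥0∞) → (Fin n → ℝ) → ℝ≥0∞) : Prop :=
  ∃ C : ℝ, 0 < C ∧ ∀ f, N (T f) ≤ ENNReal.ofReal C * N f

/-- `X` is `p`-convex. -/
def PConvex {n : ℕ} (N : ((Fin n → ℝ) → ℝ≥0∞) → ℝ≥0∞) (p : ℝ) : Prop :=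
  ∀ f g, N (fun x => (f x ^ p + g x ^ p) ^ (1 / p)) ≤ (N f ^ p + N g ^ p) ^ (1 / p)

/-- `X` is `q`-concave. -/
def QConcave {n : ℕ} (N : ((Fin n → ℝ) → ℝ≥0∞) → ℝ≥0∞) (q : ℝ) : Prop :=
  ∀ f g, (N f ^ q + N g ^ q) ^ (1 / q) ≤ N (fun x => (f x ^ q + g x ^ q) ^ (1 / q))

end

/-!
Iterating the pointwise bound `m_{γη} f ≤ m_η (m_{λ₀} f)` gives `m_{γᵏ λ₀} f ≤ m_{λ₀}^{k+1} f`,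
so `m_{γᵏ λ₀}` has norm at most `C^{k+1}` on `X`. As `m_λ` decreases in `λ`, it suffices to take
`k = ⌊log λ / log γ⌋ + 1`: then `γᵏ λ₀ ≤ λ`, and `C^{k+1} ≤ C² C^{log λ / log γ} = C² λ^{-r}`.
-/

lemma rearr_antitone {n : ℕ} (g : (Fin n → ℝ) → ℝ≥0∞) : Antitone (rearr g) :=
  fun _ _ hst => sInf_le_sInf fun _ ⟨hα, hvol⟩ => ⟨hα, hvol.trans hst⟩

lemma mMed_le_mMed_of_le {n : ℕ} {la la' : ℝ} (h : la' ≤ la) (f : (Fin n → ℝ) → ℝ≥0∞)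
    (x : Fin n → ℝ) : mMed la f x ≤ mMed la' f x :=
  iSup₂_mono fun _ _ => iSup_mono fun _ =>
    rearr_antitone _ (mul_le_mul_left (ENNReal.ofReal_le_ofReal h) _)

lemma mMed_pow_mul_le_iterate {n : ℕ} {la0 ga : ℝ} (hla0 : la0 ∈ Ioo (0 : ℝ) 1)
    (hga0 : 0 < ga) (hga1 : ga ≤ 1)
    (hgam : ∀ η ∈ Ioo (0 : ℝ) 1, ∀ (f : (Fin n → ℝ) → ℝ≥0∞) (x : Fin n → ℝ),
      mMed (ga * η) f x ≤ mMed η (mMed la0 f) x)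
    (k : ℕ) (f : (Fin n → ℝ) → ℝ≥0∞) (x : Fin n → ℝ) :
    mMed (ga ^ k * la0) f x ≤ (mMed la0)^[k + 1] f x := by
  induction k generalizing f with
  | zero => simp
  | succ k ih =>
    have hη : ga ^ k * la0 ∈ Ioo (0 : ℝ) 1 :=
      ⟨mul_pos (pow_pos hga0 k) hla0.1,
        mul_lt_one_of_nonneg_of_lt_one_right (pow_le_one₀ hga0.le hga1) hla0.1.le hla0.2⟩
    rw [pow_succ', mul_assoc, Function.iterate_succ_apply]
    exact (hgam _ hη f x).trans (ih _)

lemma apply_iterate_le_pow_mul {α : Type*} {N : α → ℝ≥0∞} {T : α → α} {c : ℝ≥0∞}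
    (hT : ∀ f, N (T f) ≤ c * N f) (k : ℕ) (f : α) : N (T^[k] f) ≤ c ^ k * N f := by
  induction k with
  | zero => simp
  | succ k ih =>
    rw [Function.iterate_succ_apply', pow_succ', mul_assoc]
    exact (hT _).trans (by gcongr)

lemma pow_succ_floor_log_div_log_lt {la ga : ℝ} (hla : 0 < la) (hga0 : 0 < ga)
    (hga1 : ga < 1) : ga ^ (⌊Real.log la / Real.log ga⌋₊ + 1) < la := by
  have hlog : Real.log ga < 0 := Real.log_neg hga0 hga1
  rw [← Real.log_lt_log_iff (by positivity) hla, Real.log_pow, ← div_lt_iff_of_neg hlog]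
  exact_mod_cast Nat.lt_floor_add_one _

lemma pow_floor_log_div_log_le_rpow {la ga C : ℝ} (hla0 : 0 < la) (hla1 : la ≤ 1)
    (hga0 : 0 < ga) (hga1 : ga < 1) (hC : 1 ≤ C) :
    C ^ ⌊Real.log la / Real.log ga⌋₊ ≤ la ^ (-(Real.log C / Real.log (1 / ga))) := by
  have hlog : Real.log ga < 0 := Real.log_neg hga0 hga1
  have hfloor : (⌊Real.log la / Real.log ga⌋₊ : ℝ) ≤ Real.log la / Real.log ga :=
    Nat.floor_le (div_nonneg_of_nonpos (Real.log_nonpos hla0.le hla1) hlog.le)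
  rw [← Real.rpow_natCast, Real.rpow_def_of_pos (by linarith), Real.rpow_def_of_pos hla0,
    Real.exp_le_exp, one_div, Real.log_inv]
  calc Real.log C * ⌊Real.log la / Real.log ga⌋₊
      ≤ Real.log C * (Real.log la / Real.log ga) :=
        mul_le_mul_of_nonneg_left hfloor (Real.log_nonneg hC)
    _ = Real.log la * -(Real.log C / -Real.log ga) := by ring

/-- the blow-up bound `‖m_λ f‖_X ≤ C² λ^{-r} ‖f‖_X` with
`r = log C / log (1/γ)`. -/
theorem stmt10 (n : ℕ) (X : BanachFunctionSpace n) (la0 C : ℝ)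
    (hla0 : la0 ∈ Set.Ioo (0 : ℝ) 1) (hC : 1 ≤ C)
    (hbdd : ∀ f, X.N (mMed la0 f) ≤ ENNReal.ofReal C * X.N f)
    (ga : ℝ) (hga : ga ∈ Set.Ioo (0 : ℝ) 1)
    (hgam : ∀ η : ℝ, η ∈ Set.Ioo (0 : ℝ) 1 →
      ∀ (f : (Fin n → ℝ) → ℝ≥0∞) (x : Fin n → ℝ),
        mMed (ga * η) f x ≤ mMed η (mMed la0 f) x) :
    ∀ la : ℝ, la ∈ Set.Ioo (0 : ℝ) 1 → ∀ f : (Fin n → ℝ) → ℝ≥0∞,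
      X.N (mMed la f) ≤
        ENNReal.ofReal (C ^ 2 * la ^ (-(Real.log C / Real.log (1 / ga)))) * X.N f := by
  intro la hla f
  set k := ⌊Real.log la / Real.log ga⌋₊
  have hk : ga ^ (k + 1) * la0 ≤ la :=
    (mul_le_of_le_one_right (pow_pos hga.1 _).le hla0.2.le).trans
      (pow_succ_floor_log_div_log_lt hla.1 hga.1 hga.2).le
  calc X.N (mMed la f)
      ≤ X.N (mMed (ga ^ (k + 1) * la0) f) :=
        X.mono _ _ (.of_forall (mMed_le_mMed_of_le hk f))
    _ ≤ X.N ((mMed la0)^[k + 2] f) :=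
        X.mono _ _ (.of_forall (mMed_pow_mul_le_iterate hla0 hga.1 hga.2.le hgam (k + 1) f))
    _ ≤ ENNReal.ofReal C ^ (k + 2) * X.N f := apply_iterate_le_pow_mul hbdd _ f
    _ ≤ ENNReal.ofReal (C ^ 2 * la ^ (-(Real.log C / Real.log (1 / ga)))) * X.N f := by
        rw [← ENNReal.ofReal_pow (by linarith), pow_add, mul_comm (C ^ k)]
        gcongr
        exact pow_floor_log_div_log_le_rpow hla.1 hla.2.le hga.1 hga.2 hC
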